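/- For two univariate Gaussian distributions N(μ₁, σ₁²) and N(μ₂, σ₂²), the squared 2-Wasserstein distance equals (μ₁ − μ₂)² + (σ₁ − σ₂)², where the Wasserstein distance is taken with respect to the Euclidean metric on ℝ. -/

import Mathlib

open MeasureTheory ProbabilityTheory

/-
Every coupling `γ` of `P` and `Q` has cost `E_γ[(X - Y)²] = (E X - E Y)² + Var(X - Y)`, and
`Var(X - Y) = σ₁² - 2 cov(X, Y) + σ₂² ≥ (σ₁ - σ₂)²` by Cauchy–Schwarz for the covariance. The
bound is attained by the comonotone coupling `Z ↦ (σ₁ Z + μ₁, σ₂ Z + μ₂)` of a standard Gaussian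
`Z`, under which `X - Y = (σ₁ - σ₂) Z + (μ₁ - μ₂)` is Gaussian with the required second moment.
-/

namespace ProbabilityTheory

section CauchySchwarz

variable {Ω : Type*} {mΩ : MeasurableSpace Ω} {μ : Measure Ω} {X Y : Ω → ℝ}

/-- `t ↦ Var[t • X - Y]` is a nonnegative quadratic, so its discriminant is nonpositive. -/
lemma sq_covariance_le_variance_mul_variance [IsFiniteMeasure μ] (hX : MemLp X 2 μ)
    (hY : MemLp Y 2 μ) : cov[X, Y; μ] ^ 2 ≤ Var[X; μ] * Var[Y; μ] := by
  have h := discrim_le_zero (a := Var[X; μ]) (b := -2 * cov[X, Y; μ]) (c := Var[Y; μ]) fun t ↦ by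
    have := variance_nonneg (t • X - Y) μ
    rw [variance_sub (hX.const_smul t) hY, variance_smul, covariance_smul_left] at this
    linarith
  rw [discrim] at h
  linarith

lemma covariance_le_sqrt_variance_mul_sqrt_variance [IsFiniteMeasure μ] (hX : MemLp X 2 μ)
    (hY : MemLp Y 2 μ) : cov[X, Y; μ] ≤ √Var[X; μ] * √Var[Y; μ] := by
  rw [← Real.sqrt_mul (variance_nonneg X μ)]
  exact Real.le_sqrt_of_sq_le (sq_covariance_le_variance_mul_variance hX hY)

lemma sq_sub_sqrt_variance_le_variance_sub [IsFiniteMeasure μ] (hX : MemLp X 2 μ)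
    (hY : MemLp Y 2 μ) : (√Var[X; μ] - √Var[Y; μ]) ^ 2 ≤ Var[X - Y; μ] := by
  rw [variance_sub hX hY]
  nlinarith [Real.sq_sqrt (variance_nonneg X μ), Real.sq_sqrt (variance_nonneg Y μ),
    covariance_le_sqrt_variance_mul_sqrt_variance hX hY]

lemma sq_sub_integral_add_sq_sub_sqrt_variance_le_integral_sq_sub [IsProbabilityMeasure μ]
    (hX : MemLp X 2 μ) (hY : MemLp Y 2 μ) :
    (μ[X] - μ[Y]) ^ 2 + (√Var[X; μ] - √Var[Y; μ]) ^ 2 ≤ ∫ ω, (X ω - Y ω) ^ 2 ∂μ := by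
  have hvar := variance_eq_sub (hX.sub hY)
  simp only [Pi.pow_apply, Pi.sub_apply] at hvar
  rw [integral_sub (hX.integrable one_le_two) (hY.integrable one_le_two)] at hvar
  linarith [sq_sub_sqrt_variance_le_variance_sub hX hY]

end CauchySchwarz

lemma sq_sub_integral_add_sq_sub_sqrt_variance_le_integral_sq_sub_of_map_fst_map_snd
    {γ : Measure (ℝ × ℝ)} [IsProbabilityMeasure γ] {P Q : Measure ℝ}
    (hP : γ.map Prod.fst = P) (hQ : γ.map Prod.snd = Q) (hP2 : MemLp id 2 P)
    (hQ2 : MemLp id 2 Q) :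
    (∫ x, x ∂P - ∫ y, y ∂Q) ^ 2 + (√Var[id; P] - √Var[id; Q]) ^ 2
      ≤ ∫ p, (p.1 - p.2) ^ 2 ∂γ := by
  subst hP hQ
  rw [memLp_map_measure_iff aestronglyMeasurable_id measurable_fst.aemeasurable] at hP2
  rw [memLp_map_measure_iff aestronglyMeasurable_id measurable_snd.aemeasurable] at hQ2
  rw [integral_map (f := fun x ↦ x) measurable_fst.aemeasurable aestronglyMeasurable_id,
    integral_map (f := fun y ↦ y) measurable_snd.aemeasurable aestronglyMeasurable_id,
    variance_id_map measurable_fst.aemeasurable, variance_id_map measurable_snd.aemeasurable]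
  exact sq_sub_integral_add_sq_sub_sqrt_variance_le_integral_sq_sub hP2 hQ2

lemma gaussianReal_map_const_mul_add (μ σ : ℝ) :
    (gaussianReal 0 1).map (fun z ↦ σ * z + μ) = gaussianReal μ (σ ^ 2).toNNReal := by
  have : (fun z : ℝ ↦ σ * z + μ) = (· + μ) ∘ (σ * ·) := rfl
  rw [this, ← Measure.map_map (measurable_add_const μ) (measurable_const_mul σ),
    gaussianReal_map_const_mul, gaussianReal_map_add_const]
  congr 1
  · simp
  · ext; simp [sq_nonneg]

lemma integral_sq_gaussianReal (μ : ℝ) (v : NNReal) :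
    ∫ x, x ^ 2 ∂gaussianReal μ v = μ ^ 2 + v := by
  have h := variance_eq_sub (memLp_id_gaussianReal (μ := μ) (v := v) 2)
  simp only [variance_id_gaussianReal, id_eq, Pi.pow_apply, integral_id_gaussianReal] at h
  linarith

lemma integral_sq_sub_map_gaussianReal (μ₁ μ₂ σ₁ σ₂ : ℝ) :
    ∫ p, (p.1 - p.2) ^ 2 ∂(gaussianReal 0 1).map (fun z ↦ (σ₁ * z + μ₁, σ₂ * z + μ₂))
      = (μ₁ - μ₂) ^ 2 + (σ₁ - σ₂) ^ 2 := by
  rw [integral_map (by fun_prop) (by fun_prop)]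
  have : ∀ z : ℝ, (σ₁ * z + μ₁ - (σ₂ * z + μ₂)) ^ 2 = ((σ₁ - σ₂) * z + (μ₁ - μ₂)) ^ 2 :=
    fun z ↦ by ring
  simp_rw [this]
  rw [← integral_map (f := fun x ↦ x ^ 2) (by fun_prop) (by fun_prop),
    gaussianReal_map_const_mul_add, integral_sq_gaussianReal, Real.coe_toNNReal _ (sq_nonneg _)]

end ProbabilityTheory

/-- The squared 2-Wasserstein distance between `N(μ₁,σ₁²)` and `N(μ₂,σ₂²)` (the infimum over
couplings `γ` of `∫ (x - y)² dγ`) equals `(μ₁ - μ₂)² + (σ₁ - σ₂)²`. -/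
theorem wasserstein2_sq_gaussianReal (μ₁ μ₂ σ₁ σ₂ : ℝ) (hσ₁ : 0 ≤ σ₁) (hσ₂ : 0 ≤ σ₂) :
    sInf {r : ℝ | ∃ γ : Measure (ℝ × ℝ), IsProbabilityMeasure γ ∧
        γ.map Prod.fst = gaussianReal μ₁ (σ₁ ^ 2).toNNReal ∧
        γ.map Prod.snd = gaussianReal μ₂ (σ₂ ^ 2).toNNReal ∧
        r = ∫ p, (p.1 - p.2) ^ 2 ∂γ}
      = (μ₁ - μ₂) ^ 2 + (σ₁ - σ₂) ^ 2 := by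
  refine IsLeast.csInf_eq ⟨?_, ?_⟩
  · have hT : Measurable fun z : ℝ ↦ (σ₁ * z + μ₁, σ₂ * z + μ₂) := by fun_prop
    refine ⟨_, Measure.isProbabilityMeasure_map hT.aemeasurable, ?_, ?_,
      (integral_sq_sub_map_gaussianReal μ₁ μ₂ σ₁ σ₂).symm⟩
    · rw [Measure.map_map measurable_fst hT]
      exact gaussianReal_map_const_mul_add μ₁ σ₁
    · rw [Measure.map_map measurable_snd hT]
      exact gaussianReal_map_const_mul_add μ₂ σ₂
  · rintro r ⟨γ, hγ, hfst, hsnd, rfl⟩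
    have := sq_sub_integral_add_sq_sub_sqrt_variance_le_integral_sq_sub_of_map_fst_map_snd
      hfst hsnd (memLp_id_gaussianReal 2) (memLp_id_gaussianReal 2)
    simpa [Real.coe_toNNReal _ (sq_nonneg _), Real.sqrt_sq, hσ₁, hσ₂] using this
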